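/- Let Ω ⊆ ℝ⁶ be open with coordinates (r,s,t,x,y,z), let u : Ω → ℝ be smooth with u_s ≠ 0 on Ω and F[u] = 0 on Ω, and let U : Ω → ℝ be smooth with ℓ_F(U) = 0 on Ω. Define R₁ := −(u_y/u_s) U_r + U_t − ((u_{st} − u_{ry})/u_s) U and R₂ := −(u_z/u_s) U_r + U_x + ((u_{rz} − u_{sx})/u_s) U, and the vector fields V₁ := ∂_y − (u_y/u_s) ∂_s, V₂ := ∂_z − (u_z/u_s) ∂_s. Then V₂(R₁) = V₁(R₂) holds identically on Ω; that is, the overdetermined system V₁(Ũ) = R₁, V₂(Ũ) = R₂ defining the recursion operator is compatible whenever U is a symmetry. -/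

import Mathlib

/- Coordinates on ℝ⁶: r = 0, s = 1, t = 2, x = 3, y = 4, z = 5. -/

/-- Partial derivative of `f` in the `i`-th coordinate direction. -/
noncomputable def pd (i : Fin 6) (f : (Fin 6 → ℝ) → ℝ) (p : Fin 6 → ℝ) : ℝ :=
  fderiv ℝ f p (Pi.single i 1)

/-- The six-dimensional equation
`F[u] = u_s u_{zt} − u_z u_{st} − u_s u_{xy} + u_y u_{sx} − u_y u_{rz} + u_z u_{ry}`. -/
noncomputable def Fop (u : (Fin 6 → ℝ) → ℝ) (p : Fin 6 → ℝ) : ℝ :=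
  pd 1 u p * pd 5 (pd 2 u) p - pd 5 u p * pd 1 (pd 2 u) p
    - pd 1 u p * pd 3 (pd 4 u) p + pd 4 u p * pd 1 (pd 3 u) p
    - pd 4 u p * pd 0 (pd 5 u) p + pd 5 u p * pd 0 (pd 4 u) p

/-- The linearization `ℓ_F(W)` of `F` at `u`, applied to `W`. -/
noncomputable def ellF (u W : (Fin 6 → ℝ) → ℝ) (p : Fin 6 → ℝ) : ℝ :=
  pd 1 W p * pd 5 (pd 2 u) p + pd 1 u p * pd 5 (pd 2 W) p
    - pd 5 W p * pd 1 (pd 2 u) p - pd 5 u p * pd 1 (pd 2 W) p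
    - pd 1 W p * pd 3 (pd 4 u) p - pd 1 u p * pd 3 (pd 4 W) p
    + pd 4 W p * pd 1 (pd 3 u) p + pd 4 u p * pd 1 (pd 3 W) p
    - pd 4 W p * pd 0 (pd 5 u) p - pd 4 u p * pd 0 (pd 5 W) p
    + pd 5 W p * pd 0 (pd 4 u) p + pd 5 u p * pd 0 (pd 4 W) p

/-- `R₁ = −(u_y/u_s) U_r + U_t − ((u_{st} − u_{ry})/u_s) U`. -/
noncomputable def R₁ (u U : (Fin 6 → ℝ) → ℝ) (p : Fin 6 → ℝ) : ℝ :=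
  -(pd 4 u p / pd 1 u p) * pd 0 U p + pd 2 U p
    - ((pd 1 (pd 2 u) p - pd 0 (pd 4 u) p) / pd 1 u p) * U p

/-- `R₂ = −(u_z/u_s) U_r + U_x + ((u_{rz} − u_{sx})/u_s) U`. -/
noncomputable def R₂ (u U : (Fin 6 → ℝ) → ℝ) (p : Fin 6 → ℝ) : ℝ :=
  -(pd 5 u p / pd 1 u p) * pd 0 U p + pd 3 U p
    + ((pd 0 (pd 5 u) p - pd 1 (pd 3 u) p) / pd 1 u p) * U p

/-! The defect `V₂(R₁) − V₁(R₂)` of the recursion system is, for any `u ∈ C³` with `u_s ≠ 0` and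
any `U ∈ C²`, identically equal to `(ℓ_F(U) − ∂_s(U F[u] / u_s)) / u_s`: after expanding by the
product and quotient rules and identifying mixed partials, this is a rational identity in the
3-jet of `u` and the 2-jet of `U`. On `Ω` both `ℓ_F(U)` and `F[u]` vanish, the latter on an open
set, so that its `s`-derivative vanishes as well. -/

open Topology

section PartialDerivatives

variable {f g : (Fin 6 → ℝ) → ℝ} {p : Fin 6 → ℝ} {i : Fin 6}

lemma pd_congr (h : f =ᶠ[𝓝 p] g) (i : Fin 6) : pd i f p = pd i g p := by
  rw [pd, pd, h.fderiv_eq]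

lemma pd_fun_add (hf : DifferentiableAt ℝ f p) (hg : DifferentiableAt ℝ g p) :
    pd i (fun q => f q + g q) p = pd i f p + pd i g p := by
  simp [pd, fderiv_fun_add hf hg]

lemma pd_fun_sub (hf : DifferentiableAt ℝ f p) (hg : DifferentiableAt ℝ g p) :
    pd i (fun q => f q - g q) p = pd i f p - pd i g p := by
  simp [pd, fderiv_fun_sub hf hg]

lemma pd_fun_neg : pd i (fun q => -f q) p = -pd i f p := by
  simp [pd, fderiv_fun_neg]

lemma pd_fun_mul (hf : DifferentiableAt ℝ f p) (hg : DifferentiableAt ℝ g p) :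
    pd i (fun q => f q * g q) p = pd i f p * g p + f p * pd i g p := by
  simp only [pd, fderiv_fun_mul hf hg, add_apply, smul_apply, smul_eq_mul]
  ring

lemma pd_fun_div (hf : DifferentiableAt ℝ f p) (hg : DifferentiableAt ℝ g p) (hg0 : g p ≠ 0) :
    pd i (fun q => f q / g q) p = (pd i f p * g p - f p * pd i g p) / g p ^ 2 := by
  have hinv : pd i (fun q => (g q)⁻¹) p = -pd i g p / g p ^ 2 := by
    rw [pd, show (fun q => (g q)⁻¹) = (·⁻¹) ∘ g from rfl,
      fderiv_comp p (differentiableAt_inv hg0) hg]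
    simp only [pd, fderiv_inv, ContinuousLinearMap.comp_apply,
      ContinuousLinearMap.toSpanSingleton_apply, smul_eq_mul, mul_neg]
    field_simp
  simp only [div_eq_mul_inv, pd_fun_mul hf (hg.fun_inv hg0), hinv]
  field_simp
  ring

lemma ContDiffAt.pd {n m : WithTop ℕ∞} (hf : ContDiffAt ℝ n f p) (hmn : m + 1 ≤ n) (i : Fin 6) :
    ContDiffAt ℝ m (pd i f) p :=
  (hf.fderiv_right hmn).clm_apply contDiffAt_const

lemma pd_comm (hf : ContDiffAt ℝ 2 f p) (i j : Fin 6) : pd i (pd j f) p = pd j (pd i f) p := by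
  have hd : DifferentiableAt ℝ (fderiv ℝ f) p :=
    (hf.fderiv_right (m := 1) le_rfl).differentiableAt one_ne_zero
  have h : ∀ k l : Fin 6, pd k (pd l f) p = fderiv ℝ (fderiv ℝ f) p (Pi.single k 1) (Pi.single l 1) := by
    intro k l
    unfold pd
    rw [fderiv_clm_apply (u := fun _ => Pi.single l 1) hd (differentiableAt_const _)]
    simp
  rw [h, h, hf.isSymmSndFDerivAt (by simp)]

lemma pd_pd_comm_inner (hf : ContDiffAt ℝ 3 f p) (i j k : Fin 6) :
    pd k (pd i (pd j f)) p = pd k (pd j (pd i f)) p := by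
  refine pd_congr ?_ k
  filter_upwards [(hf.of_le (by norm_num : (2 : WithTop ℕ∞) ≤ 3)).eventually (by simp)] with q hq
  exact pd_comm hq i j

end PartialDerivatives

theorem recursion_defect_eq {u U : (Fin 6 → ℝ) → ℝ} {p : Fin 6 → ℝ}
    (hu : ContDiffAt ℝ 3 u p) (hU : ContDiffAt ℝ 2 U p) (hus : pd 1 u p ≠ 0) :
    (pd 5 (R₁ u U) p - pd 5 u p / pd 1 u p * pd 1 (R₁ u U) p)
        - (pd 4 (R₂ u U) p - pd 4 u p / pd 1 u p * pd 1 (R₂ u U) p)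
      = (ellF u U p - pd 1 (fun q => U q * Fop u q / pd 1 u q) p) / pd 1 u p := by
  have hu₂ : ContDiffAt ℝ 2 u p := hu.of_le (by norm_num)
  have hu' : ∀ k, ContDiffAt ℝ 2 (pd k u) p := fun k => hu.pd (by norm_num) k
  have hdU : DifferentiableAt ℝ U p := hU.differentiableAt (by simp)
  have hdU₁ : ∀ k, DifferentiableAt ℝ (pd k U) p := fun k =>
    (hU.pd (m := 1) (by norm_num) k).differentiableAt one_ne_zero
  have hdu₁ : ∀ k, DifferentiableAt ℝ (pd k u) p := fun k => (hu' k).differentiableAt (by simp)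
  have hdu₂ : ∀ k l, DifferentiableAt ℝ (pd k (pd l u)) p := fun k l =>
    ((hu' l).pd (m := 1) (by norm_num) k).differentiableAt one_ne_zero
  unfold R₁ R₂ ellF
  simp (disch := first | assumption | fun_prop (disch := assumption)) only
    [Fop, pd_fun_add, pd_fun_sub, pd_fun_mul, pd_fun_neg, pd_fun_div]
  -- put each mixed partial in the form in which it occurs in `ℓ_F(U)` and in `∂_s F[u]`
  rw [pd_comm hu₂ 5 4, pd_comm hu₂ 5 1, pd_comm hu₂ 4 1,
    pd_comm hU 5 0, pd_comm hU 4 0, pd_comm hU 4 3,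
    pd_comm (hu' 2) 5 1, pd_comm (hu' 4) 5 0, pd_pd_comm_inner hu 5 4 0,
    pd_comm (hu' 5) 4 0, pd_comm (hu' 3) 4 1, pd_pd_comm_inner hu 4 3 1]
  field_simp
  ring

/-- Compatibility of the recursion system: `V₂(R₁) = V₁(R₂)`, where
`V₁ = ∂_y − (u_y/u_s) ∂_s` and `V₂ = ∂_z − (u_z/u_s) ∂_s`. -/
theorem recursion_system_compatible_six_dim
    (Ω : Set (Fin 6 → ℝ)) (hΩ : IsOpen Ω)
    (u U : (Fin 6 → ℝ) → ℝ)
    (hu : ContDiffOn ℝ (⊤ : ℕ∞) u Ω)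
    (hU : ContDiffOn ℝ (⊤ : ℕ∞) U Ω)
    (hus : ∀ p ∈ Ω, pd 1 u p ≠ 0)
    (hF : ∀ p ∈ Ω, Fop u p = 0)
    (hsym : ∀ p ∈ Ω, ellF u U p = 0) :
    ∀ p ∈ Ω,
      pd 5 (R₁ u U) p - (pd 5 u p / pd 1 u p) * pd 1 (R₁ u U) p =
        pd 4 (R₂ u U) p - (pd 4 u p / pd 1 u p) * pd 1 (R₂ u U) p := by
  intro p hp
  have hΩp : Ω ∈ 𝓝 p := hΩ.mem_nhds hp
  have hu₃ : ContDiffAt ℝ 3 u p := (hu.contDiffAt hΩp).of_le (WithTop.coe_le_coe.mpr le_top)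
  have hU₂ : ContDiffAt ℝ 2 U p := (hU.contDiffAt hΩp).of_le (WithTop.coe_le_coe.mpr le_top)
  have hFs : pd 1 (fun q => U q * Fop u q / pd 1 u q) p = 0 := by
    have hzero : (fun q => U q * Fop u q / pd 1 u q) =ᶠ[𝓝 p] fun _ => 0 := by
      filter_upwards [hΩp] with q hq
      simp [hF q hq]
    rw [pd_congr hzero]
    simp [pd]
  rw [← sub_eq_zero, recursion_defect_eq hu₃ hU₂ (hus p hp), hsym p hp, hFs, sub_zero, zero_div]
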